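/- Let $T$ be a self-adjoint operator, $\gamma > 0$, and suppose the strict Mourre estimate $E_T(I)\, i[T,A]\, E_T(I) \ge \gamma E_T(I) + K$ holds on an interval $I$ around $\lambda$ with $K$ compact. If $\lambda$ is not an eigenvalue of $T$, then for every $0 < \gamma' < \gamma$ there exists a smaller interval $I' \ni \lambda$ such that $E_T(I')\, i[T,A]\, E_T(I') \ge \gamma' E_T(I')$ (without compact error). -/

import Mathlib

open scoped InnerProductSpace Topology
open Filter

/-- The projection-valued spectral measure of a (bounded) self-adjoint operator `T`, recorded
with the properties used here: the projections are self-adjoint, multiplicative in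
intersections, `E(univ) = 1`, strongly σ-continuous along decreasing sequences of sets, and
`E({λ})` is the projection onto the eigenspace `ker (T - λ)`. -/
structure SpectralMeasure (H : Type*) [NormedAddCommGroup H]
    [InnerProductSpace ℂ H] [CompleteSpace H] (T : H →L[ℂ] H) where
  E : Set ℝ → (H →L[ℂ] H)
  selfAdj : ∀ s, IsSelfAdjoint (E s)
  inter : ∀ s t, E (s ∩ t) = E s * E t
  univ : E Set.univ = 1
  cont : ∀ (s : ℕ → Set ℝ) (t : Set ℝ), (∀ k, s (k + 1) ⊆ s k) → (⋂ k, s k) = t →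
    ∀ u : H, Tendsto (fun k => E (s k) u) atTop (𝓝 (E t u))
  eigen : ∀ (lam : ℝ) (u : H), E {lam} u = u ↔ T u = lam • u

/-- Suppose the Mourre estimate `E_T(I) i[T,A] E_T(I) ≥ γ E_T(I) + K` holds with
`γ > 0` and `K` compact on an interval `I ∋ λ`, where `B = i[T,A]` is bounded symmetric.  If
`λ` is not an eigenvalue of `T`, then for every `0 < γ' < γ` there is a smaller interval
`I' ∋ λ`, `I' ⊆ I`, with `E_T(I') i[T,A] E_T(I') ≥ γ' E_T(I')` (no compact error). -/
theorem mourre_remove_compact_error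
    {H : Type*} [NormedAddCommGroup H] [InnerProductSpace ℂ H] [CompleteSpace H]
    (T : H →L[ℂ] H) (hT : IsSelfAdjoint T) (sm : SpectralMeasure H T)
    (B : H →L[ℂ] H) (hB : IsSelfAdjoint B)
    (K : H →L[ℂ] H) (hK : IsCompactOperator ⇑K)
    (a b lam γ : ℝ) (hlam : lam ∈ Set.Ioo a b) (hγ : 0 < γ)
    (hMourre : ∀ u : H,
      γ * ‖sm.E (Set.Ioo a b) u‖ ^ 2 +
          (⟪sm.E (Set.Ioo a b) u, K (sm.E (Set.Ioo a b) u)⟫_ℂ).re ≤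
        (⟪sm.E (Set.Ioo a b) u, B (sm.E (Set.Ioo a b) u)⟫_ℂ).re)
    (hne : ∀ u : H, T u = lam • u → u = 0) :
    ∀ γ' : ℝ, 0 < γ' → γ' < γ → ∃ δ > (0 : ℝ),
      Set.Ioo (lam - δ) (lam + δ) ⊆ Set.Ioo a b ∧
      ∀ u : H,
        γ' * ‖sm.E (Set.Ioo (lam - δ) (lam + δ)) u‖ ^ 2 ≤
          (⟪sm.E (Set.Ioo (lam - δ) (lam + δ)) u,
            B (sm.E (Set.Ioo (lam - δ) (lam + δ)) u)⟫_ℂ).re := by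
  intro γ' hγ'0 hγ'γ
  obtain ⟨ha, hb⟩ := hlam
  set ε : ℝ := γ - γ' with hεdef
  have hεpos : 0 < ε := by simp [hεdef]; linarith
  set δ₀ : ℝ := min (lam - a) (b - lam) with hδ₀def
  have hδ₀pos : 0 < δ₀ := lt_min (by linarith) (by linarith)
  -- the shrinking intervals
  set s : ℕ → Set ℝ := fun k => Set.Ioo (lam - δ₀ / (k + 1)) (lam + δ₀ / (k + 1)) with hsdef
  have hdivpos : ∀ k : ℕ, 0 < δ₀ / (k + 1 : ℝ) := by
    intro k; positivity
  have hmono : ∀ k, s (k + 1) ⊆ s k := by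
    intro k
    have h1 : δ₀ / ((k : ℝ) + 1 + 1) ≤ δ₀ / ((k : ℝ) + 1) := by
      apply div_le_div_of_nonneg_left hδ₀pos.le (by positivity) (by linarith)
    simp only [hsdef]
    push_cast
    exact Set.Ioo_subset_Ioo (by linarith) (by linarith)
  have hsub : ∀ k, s k ⊆ Set.Ioo a b := by
    intro k
    have h1 : δ₀ / ((k : ℝ) + 1) ≤ δ₀ := by
      apply div_le_self hδ₀pos.le (by linarith [Nat.cast_nonneg (α := ℝ) k])
    have h2 : δ₀ ≤ lam - a := min_le_left _ _
    have h3 : δ₀ ≤ b - lam := min_le_right _ _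
    exact Set.Ioo_subset_Ioo (by linarith) (by linarith)
  have hiInter : (⋂ k, s k) = {lam} := by
    ext x
    simp only [Set.mem_iInter, Set.mem_singleton_iff, hsdef, Set.mem_Ioo]
    constructor
    · intro hx
      by_contra hxne
      have habs : 0 < |x - lam| := abs_pos.mpr (sub_ne_zero.mpr hxne)
      obtain ⟨n, hn⟩ := exists_nat_one_div_lt (div_pos habs hδ₀pos)
      have h1 : δ₀ / ((n : ℝ) + 1) < |x - lam| := by
        have hn' : δ₀ * (1 / ((n : ℝ) + 1)) < δ₀ * (|x - lam| / δ₀) :=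
          mul_lt_mul_of_pos_left hn hδ₀pos
        have he1 : δ₀ * (1 / ((n : ℝ) + 1)) = δ₀ / ((n : ℝ) + 1) := by ring
        have he2 : δ₀ * (|x - lam| / δ₀) = |x - lam| := by field_simp
        rw [he1, he2] at hn'
        exact hn'
      obtain ⟨hx1, hx2⟩ := hx n
      have : |x - lam| < δ₀ / ((n : ℝ) + 1) := abs_sub_lt_iff.mpr ⟨by linarith, by linarith⟩
      linarith
    · rintro rfl k
      constructor <;> [linarith [hdivpos k]; linarith [hdivpos k]]
  -- idempotence and contraction
  have hidem : ∀ (t : Set ℝ) (x : H), sm.E t (sm.E t x) = sm.E t x := by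
    intro t x
    have h := sm.inter t t
    rw [Set.inter_self] at h
    calc sm.E t (sm.E t x) = (sm.E t * sm.E t) x := rfl
    _ = sm.E t x := by rw [← h]
  have hsymm : ∀ (t : Set ℝ) (x y : H), ⟪sm.E t x, y⟫_ℂ = ⟪x, sm.E t y⟫_ℂ := by
    intro t x y
    exact (sm.selfAdj t).isSymmetric x y
  have hcontr : ∀ (t : Set ℝ) (x : H), ‖sm.E t x‖ ≤ ‖x‖ := by
    intro t x
    have h1 : (‖sm.E t x‖ : ℝ) ^ 2 = (⟪sm.E t x, sm.E t x⟫_ℂ).re :=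
      (inner_self_eq_norm_sq (𝕜 := ℂ) _).symm
    have h2 : ⟪sm.E t x, sm.E t x⟫_ℂ = ⟪x, sm.E t x⟫_ℂ := by
      rw [hsymm, hidem]
    have h3 : (⟪x, sm.E t x⟫_ℂ).re ≤ ‖x‖ * ‖sm.E t x‖ := by
      calc (⟪x, sm.E t x⟫_ℂ).re ≤ |(⟪x, sm.E t x⟫_ℂ).re| := le_abs_self _
      _ ≤ ‖⟪x, sm.E t x⟫_ℂ‖ := by
          exact Complex.abs_re_le_norm _
      _ ≤ ‖x‖ * ‖sm.E t x‖ := norm_inner_le_norm _ _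
    have h4 : ‖sm.E t x‖ ^ 2 ≤ ‖x‖ * ‖sm.E t x‖ := by rw [h1, h2]; exact h3
    rcases eq_or_lt_of_le (norm_nonneg (sm.E t x)) with h5 | h5
    · rw [← h5]; exact norm_nonneg x
    · nlinarith
  -- E {lam} = 0
  have hElam : ∀ u : H, sm.E {lam} u = 0 := by
    intro u
    apply hne
    exact (sm.eigen lam (sm.E {lam} u)).mp (hidem _ u)
  -- strong convergence to 0
  have hstrong : ∀ u : H, Tendsto (fun k => sm.E (s k) u) atTop (𝓝 0) := by
    intro u
    have := sm.cont s {lam} hmono hiInter u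
    rwa [hElam u] at this
  -- compactness: finite net
  obtain ⟨C, hCcomp, hCnhds⟩ := hK
  obtain ⟨r, hrpos, hrball⟩ := Metric.mem_nhds_iff.mp hCnhds
  have himg : ⇑K '' Metric.ball 0 r ⊆ C := Set.image_subset_iff.mpr hrball
  have htb : TotallyBounded (⇑K '' Metric.ball 0 r) :=
    TotallyBounded.subset himg hCcomp.totallyBounded
  obtain ⟨t, htfin, htcover⟩ := Metric.totallyBounded_iff.mp htb (ε * r / 4) (by positivity)
  have hev : ∀ᶠ k in atTop, ∀ w ∈ t, ‖sm.E (s k) w‖ < ε * r / 4 := by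
    rw [htfin.eventually_all]
    intro w hw
    exact NormedAddCommGroup.tendsto_nhds_zero.mp (hstrong w) (ε * r / 4) (by positivity)
  obtain ⟨k, hk⟩ := hev.exists
  -- the key norm bound
  have hbound : ∀ v : H, ‖sm.E (s k) (K v)‖ ≤ ε * ‖v‖ := by
    intro v
    rcases eq_or_ne v 0 with rfl | h0
    · simp
    · have hvpos : 0 < ‖v‖ := norm_pos_iff.mpr h0
      set c : ℝ := r / (2 * ‖v‖) with hcdef
      have hcpos : 0 < c := by positivity
      have hunorm : ‖(c : ℂ) • v‖ = r / 2 := by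
        rw [norm_smul]
        simp only [Complex.norm_real, Real.norm_eq_abs, abs_of_pos hcpos, hcdef]
        field_simp
        rw [abs_of_pos (by positivity)]; field_simp [hvpos.ne']
      have hmem : K ((c : ℂ) • v) ∈ ⇑K '' Metric.ball 0 r := by
        refine ⟨(c : ℂ) • v, ?_, rfl⟩
        rw [Metric.mem_ball, dist_zero_right, hunorm]
        linarith
      obtain ⟨w, hw, hdist⟩ := Set.mem_iUnion₂.mp (htcover hmem)
      rw [Metric.mem_ball, dist_eq_norm] at hdist
      have h1 : ‖sm.E (s k) (K ((c : ℂ) • v))‖ < ε * r / 2 := by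
        have : sm.E (s k) (K ((c : ℂ) • v)) =
            sm.E (s k) (K ((c : ℂ) • v) - w) + sm.E (s k) w := by
          rw [← map_add]; congr 1; abel
        rw [this]
        calc ‖sm.E (s k) (K ((c : ℂ) • v) - w) + sm.E (s k) w‖
            ≤ ‖sm.E (s k) (K ((c : ℂ) • v) - w)‖ + ‖sm.E (s k) w‖ := norm_add_le _ _
        _ ≤ ‖K ((c : ℂ) • v) - w‖ + ‖sm.E (s k) w‖ := by
              have := hcontr (s k) (K ((c : ℂ) • v) - w); linarith
        _ < ε * r / 4 + ε * r / 4 := by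
              have := hk w hw; linarith
        _ = ε * r / 2 := by ring
      have h2 : ‖sm.E (s k) (K ((c : ℂ) • v))‖ = c * ‖sm.E (s k) (K v)‖ := by
        rw [map_smul, map_smul, norm_smul]
        simp [abs_of_pos hcpos]
      rw [h2, hcdef] at h1
      rw [div_mul_eq_mul_div, div_lt_iff₀ (by positivity)] at h1
      have h3 : r * ‖sm.E (s k) (K v)‖ < r * (ε * ‖v‖) := by
        have he : ε * r / 2 * (2 * ‖v‖) = r * (ε * ‖v‖) := by ring
        rw [he] at h1
        exact h1
      exact (lt_of_mul_lt_mul_left h3 hrpos.le).le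
  -- conclusion
  refine ⟨δ₀ / (k + 1), hdivpos k, hsub k, ?_⟩
  intro u
  set v : H := sm.E (s k) u with hvdef
  have hEv : sm.E (Set.Ioo a b) v = v := by
    have h := sm.inter (Set.Ioo a b) (s k)
    rw [Set.inter_eq_right.mpr (hsub k)] at h
    calc sm.E (Set.Ioo a b) v = (sm.E (Set.Ioo a b) * sm.E (s k)) u := rfl
    _ = sm.E (s k) u := by rw [← h]
  have hM := hMourre v
  rw [hEv] at hM
  have hKlow : -(ε * ‖v‖ ^ 2) ≤ (⟪v, K v⟫_ℂ).re := by
    have hEvv : sm.E (s k) v = v := hidem (s k) u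
    have h1 : ⟪v, K v⟫_ℂ = ⟪v, sm.E (s k) (K v)⟫_ℂ := by
      calc ⟪v, K v⟫_ℂ = ⟪sm.E (s k) v, K v⟫_ℂ := by rw [hEvv]
      _ = ⟪v, sm.E (s k) (K v)⟫_ℂ := hsymm _ _ _
    have h2 : |(⟪v, sm.E (s k) (K v)⟫_ℂ).re| ≤ ε * ‖v‖ ^ 2 := by
      calc |(⟪v, sm.E (s k) (K v)⟫_ℂ).re| ≤ ‖⟪v, sm.E (s k) (K v)⟫_ℂ‖ := by
            exact Complex.abs_re_le_norm _
      _ ≤ ‖v‖ * ‖sm.E (s k) (K v)‖ := norm_inner_le_norm _ _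
      _ ≤ ‖v‖ * (ε * ‖v‖) := by
            have := hbound v
            have := norm_nonneg v
            nlinarith
      _ = ε * ‖v‖ ^ 2 := by ring
    rw [h1]
    have := abs_le.mp h2
    linarith [this.1]
  have hfinal : γ' * ‖v‖ ^ 2 ≤ (⟪v, B v⟫_ℂ).re := by
    have hn : (0:ℝ) ≤ ‖v‖ ^ 2 := by positivity
    have : γ' * ‖v‖ ^ 2 = γ * ‖v‖ ^ 2 - ε * ‖v‖ ^ 2 := by rw [hεdef]; ring
    linarith
  exact hfinal
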